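/- Let H be a real Hilbert space and a₁, a₂ : H × H → ℝ two bounded coercive symmetric bilinear forms with a₁(u,u) ≤ a₂(u,u) for all u. For ℓ ∈ H* let u₁, u₂ be the unique elements with aⱼ(uⱼ, v) = ℓ(v) for all v (Lax–Milgram). Then ℓ(u₂) ≤ ℓ(u₁). -/

import Mathlib

theorem ContinuousLinearMap.two_mul_apply_le_add
    {E : Type*} [SeminormedAddCommGroup E] [NormedSpace ℝ E] (a : E →L[ℝ] E →L[ℝ] ℝ)
    (hsym : ∀ u v : E, a u v = a v u) (hnonneg : ∀ u : E, 0 ≤ a u u) (u v : E) :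
    2 * a u v ≤ a u u + a v v := by
  have hexpand : a (u - v) (u - v) = a u u - 2 * a u v + a v v := by
    simp only [map_sub, sub_apply, hsym v u]
    ring
  linarith [hnonneg (u - v)]

theorem ContinuousLinearMap.apply_self_nonneg_of_coercive {E : Type*} [SeminormedAddCommGroup E]
    [NormedSpace ℝ E] (a : E →L[ℝ] E →L[ℝ] ℝ) {c : ℝ} (hc : 0 < c)
    (hcoer : ∀ u : E, c * ‖u‖ ^ 2 ≤ a u u) (u : E) : 0 ≤ a u u :=
  (by positivity : 0 ≤ c * ‖u‖ ^ 2).trans (hcoer u)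

theorem lax_milgram_monotonicity_general
    {H : Type*} [NormedAddCommGroup H] [InnerProductSpace ℝ H]
    (a₁ a₂ : H →L[ℝ] H →L[ℝ] ℝ)
    (hsym₁ : ∀ u v : H, a₁ u v = a₁ v u)
    (c : ℝ) (hc : 0 < c)
    (hcoer₁ : ∀ u : H, c * ‖u‖ ^ 2 ≤ a₁ u u)
    (hle : ∀ u : H, a₁ u u ≤ a₂ u u)
    (ℓ : H →L[ℝ] ℝ) (u₁ u₂ : H)
    (hu₁ : ∀ v : H, a₁ u₁ v = ℓ v) (hu₂ : ∀ v : H, a₂ u₂ v = ℓ v) :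
    ℓ u₂ ≤ ℓ u₁ := by
  have hdouble : 2 * ℓ u₂ ≤ ℓ u₁ + ℓ u₂ :=
    calc 2 * ℓ u₂ = 2 * a₁ u₁ u₂ := by rw [hu₁]
      _ ≤ a₁ u₁ u₁ + a₁ u₂ u₂ :=
        a₁.two_mul_apply_le_add hsym₁ (a₁.apply_self_nonneg_of_coercive hc hcoer₁) u₁ u₂
      _ ≤ a₁ u₁ u₁ + a₂ u₂ u₂ := by gcongr; exact hle u₂
      _ = ℓ u₁ + ℓ u₂ := by rw [hu₁, hu₂]
  linarith

theorem lax_milgram_monotonicity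
    {H : Type*} [NormedAddCommGroup H] [InnerProductSpace ℝ H] [CompleteSpace H]
    (a₁ a₂ : H →L[ℝ] H →L[ℝ] ℝ)
    (hsym₁ : ∀ u v : H, a₁ u v = a₁ v u) (hsym₂ : ∀ u v : H, a₂ u v = a₂ v u)
    (c : ℝ) (hc : 0 < c)
    (hcoer₁ : ∀ u : H, c * ‖u‖ ^ 2 ≤ a₁ u u) (hcoer₂ : ∀ u : H, c * ‖u‖ ^ 2 ≤ a₂ u u)
    (hle : ∀ u : H, a₁ u u ≤ a₂ u u)
    (ℓ : H →L[ℝ] ℝ) (u₁ u₂ : H)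
    (hu₁ : ∀ v : H, a₁ u₁ v = ℓ v) (hu₂ : ∀ v : H, a₂ u₂ v = ℓ v) :
    ℓ u₂ ≤ ℓ u₁ :=
  lax_milgram_monotonicity_general a₁ a₂ hsym₁ c hc hcoer₁ hle ℓ u₁ u₂ hu₁ hu₂
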